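/- In a complete stratified precubical set, if x, y, z ∈ X_n satisfy ∂_k^+x = ∂_k^−y and ∂_k^+y = ∂_k^−z, then (x ∘_k y) ∘_k z = x ∘_k (y ∘_k z). -/
import Mathlib


namespace CubicalNerve

/-- Signs: `true` is `+`, `false` is `−`, as an integer `±1`. -/
def sgn (α : Bool) : ℤ := if α then 1 else -1

/-- A stratified precubical set: a sequence of sets `X n` with face operations
`∂_i^α : X n → X (n-1)` (with `i : Fin n`, i.e. `i+1` in the paper's 1-indexing)
satisfying the precubical relations, together with a class of thin `n`-cubes for
`n ≥ 1` (a `0`-cube is never thin). -/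
structure SPS where
  X : ℕ → Type
  face : ∀ {n : ℕ}, Fin n → Bool → X n → X (n - 1)
  face_rel : ∀ {n : ℕ} (j : Fin n) (i : Fin (n - 1)) (h : (j : ℕ) ≤ (i : ℕ)) (α β : Bool)
      (x : X n),
    face i α (face j β x) =
      face ⟨(j : ℕ), lt_of_le_of_lt h i.isLt⟩ β
        (face ⟨(i : ℕ) + 1, by have := i.isLt; omega⟩ α x)
  thin : ∀ {n : ℕ}, X n → Prop
  thin_zero : ∀ x : X 0, ¬ thin x

/-- The face operation `∂_i^α` with a 1-indexed natural number index (clamped into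
range); the identity map in dimension `0`. -/
def SPS.faceN (P : SPS) (i : ℕ) (α : Bool) : ∀ {n : ℕ}, P.X n → P.X (n - 1)
  | 0, x => x
  | m + 1, x =>
      P.face (⟨min (i - 1) m, Nat.lt_succ_of_le (Nat.min_le_right _ _)⟩ : Fin (m + 1)) α x

/-- The action of a nonidentity precubical operation, written as a nonempty list
`(p :: L)` of 1-indexed (index, sign) pairs composed right-to-left (so the last
entry of the list is applied first), on a box or shell `b` (given as a family of
`m`-cubes indexed by all of `Fin (m+1) × Bool`): the last factor picks out an entry
of `b`, and the remaining factors act by face operations. -/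
def SPS.apBoxAux (P : SPS) {m : ℕ} (b : Fin (m + 1) → Bool → P.X m) :
    (ℕ × Bool) → (L : List (ℕ × Bool)) → P.X (m - L.length)
  | p, [] => b ⟨min (p.1 - 1) m, Nat.lt_succ_of_le (Nat.min_le_right _ _)⟩ p.2
  | p, q :: L => P.faceN p.1 p.2 (P.apBoxAux b q L)

/-- `L` is the standard decomposition of a precubical operation on `n`-cubes:
its 1-indexed indices are strictly increasing and lie in `{1, …, n}`. -/
def IsStdList (n : ℕ) (L : List (ℕ × Bool)) : Prop :=
  L.Chain' (fun p q => p.1 < q.1) ∧ ∀ p ∈ L, 1 ≤ p.1 ∧ p.1 ≤ n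

/-- Insertion of a factor into a standard decomposition, preserving the order. -/
def insSorted (a : ℕ × Bool) : List (ℕ × Bool) → List (ℕ × Bool)
  | [] => [a]
  | p :: L => if a.1 ≤ p.1 then a :: p :: L else p :: insSorted a L

/-- The standard decomposition `L` has constant sign: `(−1)^{i(r)−r} α(r)` is the same
for all `r`, where `∂_{i(r)}^{α(r)}` is the `r`-th factor (`r` 1-indexed). -/
def ConstSign (L : List (ℕ × Bool)) : Prop :=
  ∃ ε : ℤ, ∀ (t : ℕ) (h : t < L.length),
    (-1 : ℤ) ^ ((L.get ⟨t, h⟩).1 + t + 1) * sgn (L.get ⟨t, h⟩).2 = ε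

/-- The precubical operation with standard decomposition `L` (on `n`-cubes) is
complementary to the face operation `∂_k^γ` (`k` 1-indexed): `L` has no factor
`∂_k^±`, and inserting `∂_k^{−γ}` produces a standard decomposition with constant
sign. -/
def ComplOp (n k : ℕ) (γ : Bool) (L : List (ℕ × Bool)) : Prop :=
  IsStdList n L ∧ (∀ p ∈ L, p.1 ≠ k) ∧ ConstSign (insSorted (k, !γ) L)

/-- The face operation `∂_l^δ` is complementary to `∂_k^γ` (1-indexed). -/
def FaceComplOp (n k : ℕ) (γ : Bool) (l : ℕ) (δ : Bool) : Prop := ComplOp n k γ [(l, δ)]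

/-- `b` is an `(m+1)`-box opposite `∂_k^γ`, recorded as a total family of `m`-cubes
whose value at `(k, γ)` is irrelevant: the compatibility conditions
`∂_i^α b_j^β = ∂_j^β b_{i+1}^α` hold whenever neither index involved is `(k, γ)`. -/
def SPS.IsBox (P : SPS) {m : ℕ} (k : Fin (m + 1)) (γ : Bool)
    (b : Fin (m + 1) → Bool → P.X m) : Prop :=
  ∀ (j : Fin (m + 1)) (i : Fin m) (h : (j : ℕ) ≤ (i : ℕ)) (α β : Bool),
    ((j, β) : Fin (m + 1) × Bool) ≠ (k, γ) →
    ((⟨(i : ℕ) + 1, by have := i.isLt; omega⟩, α) : Fin (m + 1) × Bool) ≠ (k, γ) →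
    P.face i α (b j β) =
      P.face ⟨(j : ℕ), lt_of_le_of_lt h i.isLt⟩ β
        (b ⟨(i : ℕ) + 1, by have := i.isLt; omega⟩ α)

/-- `s` is an `(m+1)`-shell: a family of `m`-cubes indexed by all the face operations,
with `∂_i^α s_j^β = ∂_j^β s_{i+1}^α` for `i ≥ j`. -/
def SPS.IsShell (P : SPS) {m : ℕ} (s : Fin (m + 1) → Bool → P.X m) : Prop :=
  ∀ (j : Fin (m + 1)) (i : Fin m) (h : (j : ℕ) ≤ (i : ℕ)) (α β : Bool),
    P.face i α (s j β) =
      P.face ⟨(j : ℕ), lt_of_le_of_lt h i.isLt⟩ β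
        (s ⟨(i : ℕ) + 1, by have := i.isLt; omega⟩ α)

/-- The box `b` opposite `∂_k^γ` is admissible: `θ b` is thin for every non-identity
precubical operation `θ` complementary to `∂_k^γ`. -/
def SPS.AdmBox (P : SPS) {m : ℕ} (k : Fin (m + 1)) (γ : Bool)
    (b : Fin (m + 1) → Bool → P.X m) : Prop :=
  P.IsBox k γ b ∧
  ∀ (p : ℕ × Bool) (L : List (ℕ × Bool)),
    ComplOp (m + 1) ((k : ℕ) + 1) γ (p :: L) → P.thin (P.apBoxAux b p L)

/-- The shell `s` is admissible: there are distinct, mutually non-complementary face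
operations `∂_k^γ` and `∂_l^δ` with `s_k^γ = s_l^δ` such that the boxes obtained by
removing either are admissible. -/
def SPS.AdmShell (P : SPS) {m : ℕ} (s : Fin (m + 1) → Bool → P.X m) : Prop :=
  P.IsShell s ∧
  ∃ (k l : Fin (m + 1)) (γ δ : Bool),
    ((k, γ) : Fin (m + 1) × Bool) ≠ (l, δ) ∧
    ¬ FaceComplOp (m + 1) ((k : ℕ) + 1) γ ((l : ℕ) + 1) δ ∧
    ¬ FaceComplOp (m + 1) ((l : ℕ) + 1) δ ((k : ℕ) + 1) γ ∧
    s k γ = s l δ ∧ P.AdmBox k γ s ∧ P.AdmBox l δ s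

/-- `x` is a filler of the box `b` opposite `∂_k^γ`. -/
def SPS.FillsBox (P : SPS) {m : ℕ} (k : Fin (m + 1)) (γ : Bool)
    (b : Fin (m + 1) → Bool → P.X m) (x : P.X (m + 1)) : Prop :=
  ∀ (i : Fin (m + 1)) (α : Bool), ((i, α) : Fin (m + 1) × Bool) ≠ (k, γ) →
    P.face i α x = b i α

/-- `x` is a filler of the shell `s`. -/
def SPS.FillsShell (P : SPS) {m : ℕ} (s : Fin (m + 1) → Bool → P.X m)
    (x : P.X (m + 1)) : Prop :=
  ∀ (i : Fin (m + 1)) (α : Bool), P.face i α x = s i α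

/-- `P` is a *complete* stratified precubical set: every admissible box and every
admissible shell has a unique thin filler, and if `x` is the thin filler of an
admissible box `b` opposite `∂_k^γ` all of whose entries are thin, then the
additional face `∂_k^γ x` is thin as well. -/
def SPS.IsComplete (P : SPS) : Prop :=
  (∀ (m : ℕ) (k : Fin (m + 1)) (γ : Bool) (b : Fin (m + 1) → Bool → P.X m),
     P.AdmBox k γ b → ∃! x : P.X (m + 1), P.thin x ∧ P.FillsBox k γ b x) ∧
  (∀ (m : ℕ) (s : Fin (m + 1) → Bool → P.X m),
     P.AdmShell s → ∃! x : P.X (m + 1), P.thin x ∧ P.FillsShell s x) ∧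
  (∀ (m : ℕ) (k : Fin (m + 1)) (γ : Bool) (b : Fin (m + 1) → Bool → P.X m)
     (x : P.X (m + 1)),
     P.AdmBox k γ b → P.thin x → P.FillsBox k γ b x →
     (∀ (i : Fin (m + 1)) (α : Bool), ((i, α) : Fin (m + 1) × Bool) ≠ (k, γ) →
        P.thin (b i α)) →
     P.thin (P.face k γ x))

/-- `E` is the system of degeneracy operations `ε` of a complete stratified precubical
set: `E n k x` (`x` an `n`-cube, `k : Fin (n+1)`, i.e. `ε_{k+1}` in 1-indexed notation)
is thin with faces `∂_i^α ε_k x = ε_{k-1} ∂_i^α x` for `i < k`, `∂_k^± ε_k x = x`,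
and `∂_i^α ε_k x = ε_k ∂_{i-1}^α x` for `i > k`. -/
def SPS.IsDegSys (P : SPS) (E : ∀ n : ℕ, Fin (n + 1) → P.X n → P.X (n + 1)) : Prop :=
  (∀ (n : ℕ) (k : Fin (n + 1)) (x : P.X n), P.thin (E n k x)) ∧
  (∀ (n : ℕ) (k : Fin (n + 1)) (α : Bool) (x : P.X n), P.face k α (E n k x) = x) ∧
  (∀ (n : ℕ) (k i : Fin (n + 2)) (α : Bool) (x : P.X (n + 1)) (h : (i : ℕ) < (k : ℕ)),
     P.face i α (E (n + 1) k x) =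
       E n ⟨(k : ℕ) - 1, by have := k.isLt; omega⟩
         (P.face ⟨(i : ℕ), by have := k.isLt; omega⟩ α x)) ∧
  (∀ (n : ℕ) (k i : Fin (n + 2)) (α : Bool) (x : P.X (n + 1)) (h : (k : ℕ) < (i : ℕ)),
     P.face i α (E (n + 1) k x) =
       E n ⟨(k : ℕ), by have := i.isLt; omega⟩
         (P.face ⟨(i : ℕ) - 1, by have := i.isLt; omega⟩ α x))

/-- `Γ` is the system of connection operations of a complete stratified precubical set
(`Γ n k γ x` for `x` an `(n+1)`-cube and `k : Fin (n+1)`, i.e. `Γ_{k+1}^γ`). -/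
def SPS.IsConnSys (P : SPS) (E : ∀ n : ℕ, Fin (n + 1) → P.X n → P.X (n + 1))
    (Γ : ∀ n : ℕ, Fin (n + 1) → Bool → P.X (n + 1) → P.X (n + 2)) : Prop :=
  (∀ (n : ℕ) (k : Fin (n + 1)) (γ : Bool) (x : P.X (n + 1)), P.thin (Γ n k γ x)) ∧
  (∀ (n : ℕ) (k : Fin (n + 1)) (γ : Bool) (x : P.X (n + 1)),
     P.face k.castSucc γ (Γ n k γ x) = x ∧ P.face k.succ γ (Γ n k γ x) = x) ∧
  (∀ (n : ℕ) (k : Fin (n + 1)) (γ : Bool) (x : P.X (n + 1)),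
     P.face k.castSucc (!γ) (Γ n k γ x) = E n k (P.face k (!γ) x) ∧
     P.face k.succ (!γ) (Γ n k γ x) = E n k (P.face k (!γ) x)) ∧
  (∀ (n : ℕ) (k : Fin (n + 2)) (γ : Bool) (i : Fin (n + 3)) (α : Bool) (x : P.X (n + 2))
     (h : (i : ℕ) < (k : ℕ)),
     P.face i α (Γ (n + 1) k γ x) =
       Γ n ⟨(k : ℕ) - 1, by have := k.isLt; omega⟩ γ
         (P.face ⟨(i : ℕ), by have := k.isLt; omega⟩ α x)) ∧
  (∀ (n : ℕ) (k : Fin (n + 2)) (γ : Bool) (i : Fin (n + 3)) (α : Bool) (x : P.X (n + 2))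
     (h : (k : ℕ) + 1 < (i : ℕ)),
     P.face i α (Γ (n + 1) k γ x) =
       Γ n ⟨(k : ℕ), by have := i.isLt; omega⟩ γ
         (P.face ⟨(i : ℕ) - 1, by have := i.isLt; omega⟩ α x))

/-- `G` is the system of composers of a complete stratified precubical set:
whenever `∂_k^+ x = ∂_k^- y`, the `(n+2)`-cube `G n k x y` is thin and has the faces
prescribed in the definition of the composer `G_k(x, y)` (all of them except the one
opposite `∂_k^-`). -/
def SPS.IsCompSys (P : SPS) (E : ∀ n : ℕ, Fin (n + 1) → P.X n → P.X (n + 1))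
    (G : ∀ n : ℕ, Fin (n + 1) → P.X (n + 1) → P.X (n + 1) → P.X (n + 2)) : Prop :=
  (∀ (n : ℕ) (k : Fin (n + 1)) (x y : P.X (n + 1)),
     P.face k true x = P.face k false y → P.thin (G n k x y)) ∧
  (∀ (n : ℕ) (k : Fin (n + 1)) (x y : P.X (n + 1)),
     P.face k true x = P.face k false y →
       P.face k.castSucc true (G n k x y) = y ∧
       P.face k.succ false (G n k x y) = x ∧
       P.face k.succ true (G n k x y) = E n k (P.face k true y)) ∧
  (∀ (n : ℕ) (k : Fin (n + 2)) (i : Fin (n + 3)) (α : Bool) (x y : P.X (n + 2)),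
     P.face k true x = P.face k false y → ∀ h : (i : ℕ) < (k : ℕ),
     P.face i α (G (n + 1) k x y) =
       G n ⟨(k : ℕ) - 1, by have := k.isLt; omega⟩
         (P.face ⟨(i : ℕ), by have := k.isLt; omega⟩ α x)
         (P.face ⟨(i : ℕ), by have := k.isLt; omega⟩ α y)) ∧
  (∀ (n : ℕ) (k : Fin (n + 2)) (i : Fin (n + 3)) (α : Bool) (x y : P.X (n + 2)),
     P.face k true x = P.face k false y → ∀ h : (k : ℕ) + 1 < (i : ℕ),
     P.face i α (G (n + 1) k x y) =
       G n ⟨(k : ℕ), by have := i.isLt; omega⟩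
         (P.face ⟨(i : ℕ) - 1, by have := i.isLt; omega⟩ α x)
         (P.face ⟨(i : ℕ) - 1, by have := i.isLt; omega⟩ α y))

/-- The composite `x ∘_k y = ∂_k^- G_k(x, y)`. -/
def SPS.cmp (P : SPS) (G : ∀ n : ℕ, Fin (n + 1) → P.X (n + 1) → P.X (n + 1) → P.X (n + 2))
    {n : ℕ} (k : Fin (n + 1)) (x y : P.X (n + 1)) : P.X (n + 1) :=
  P.face k.castSucc false (G n k x y)


section AssocAux

variable {P : SPS}

lemma face_congr {n : ℕ} {i j : Fin n} (h : (i : ℕ) = (j : ℕ)) (α : Bool) (u : P.X n) :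
    P.face i α u = P.face j α u := by
  cases Fin.ext h; rfl

lemma swap {m : ℕ} (a b : ℕ) (α β : Bool) (u : P.X (m + 2))
    (hab : a ≤ b) (hb : b < m + 1) :
    P.face ⟨b, by omega⟩ α (P.face ⟨a, by omega⟩ β u) =
      P.face ⟨a, by omega⟩ β (P.face ⟨b + 1, by omega⟩ α u) :=
  P.face_rel (n := m + 2) ⟨a, by omega⟩ ⟨b, by omega⟩ hab α β u

lemma faceN_eq {m : ℕ} (a : ℕ) (ha' : a ≤ m + 1) (α : Bool) (u : P.X (m + 1)) :
    P.faceN a α u = P.face ⟨a - 1, by omega⟩ α u := by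
  show P.face ⟨min (a - 1) m, _⟩ α u = _
  exact face_congr (by simp; omega) α u

lemma compat_low {n : ℕ} (k : Fin (n + 2)) (x y : P.X (n + 2))
    (h : P.face k true x = P.face k false y) (i c : ℕ) (hck : c + 1 = (k : ℕ))
    (hi : i ≤ c) (α : Bool) :
    P.face ⟨c, by omega⟩ true (P.face ⟨i, by omega⟩ α x) =
      P.face ⟨c, by omega⟩ false (P.face ⟨i, by omega⟩ α y) := by
  have h' : P.face (⟨(k : ℕ), k.isLt⟩ : Fin (n + 2)) true x
      = P.face (⟨(k : ℕ), k.isLt⟩ : Fin (n + 2)) false y := h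
  rw [swap i c true α x hi (by omega), swap i c false α y hi (by omega)]
  rw [face_congr (i := (⟨c + 1, by omega⟩ : Fin (n + 2)))
      (j := (⟨(k : ℕ), k.isLt⟩ : Fin (n + 2))) hck true x]
  rw [face_congr (i := (⟨c + 1, by omega⟩ : Fin (n + 2)))
      (j := (⟨(k : ℕ), k.isLt⟩ : Fin (n + 2))) hck false y]
  rw [h']

lemma compat_high {n : ℕ} (k : Fin (n + 2)) (x y : P.X (n + 2))
    (h : P.face k true x = P.face k false y) (b : ℕ) (hkb : (k : ℕ) < b) (hb : b ≤ n + 1)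
    (α : Bool) :
    P.face ⟨(k : ℕ), by omega⟩ true (P.face ⟨b, by omega⟩ α x) =
      P.face ⟨(k : ℕ), by omega⟩ false (P.face ⟨b, by omega⟩ α y) := by
  have h' : P.face (⟨(k : ℕ), k.isLt⟩ : Fin (n + 2)) true x
      = P.face (⟨(k : ℕ), k.isLt⟩ : Fin (n + 2)) false y := h
  obtain ⟨c, rfl⟩ : ∃ c, b = c + 1 := ⟨b - 1, by omega⟩
  rw [← swap (k : ℕ) c α true x (by omega) (by omega),
    ← swap (k : ℕ) c α false y (by omega) (by omega), h']

/-- `Safe j u`: `u` is thin, and this persists under application of any strictly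
decreasing sequence of face operations with 1-indexed indices `< j` (in range). -/
def Safe (P : SPS) : (j : ℕ) → ∀ {m : ℕ}, P.X m → Prop
  | 0, _, u => P.thin u
  | j + 1, m, u => P.thin u ∧
      ∀ (a : ℕ) (α : Bool), 1 ≤ a → a ≤ j → a ≤ m → Safe P a (P.faceN a α u)
  termination_by j => j

/-- Like `Safe`, but the faces with 1-index `k0`, as well as `(k0+1, −)`, are
never applied. -/
def SafeK (P : SPS) (k0 : ℕ) : (j : ℕ) → ∀ {m : ℕ}, P.X m → Prop
  | 0, _, u => P.thin u
  | j + 1, m, u => P.thin u ∧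
      ∀ (a : ℕ) (α : Bool), 1 ≤ a → a ≤ j → a ≤ m → a ≠ k0 →
        ¬(a = k0 + 1 ∧ α = false) → SafeK P k0 a (P.faceN a α u)
  termination_by j => j

lemma Safe_thin {j m : ℕ} {u : P.X m} (h : Safe P j u) : P.thin u := by
  cases j with
  | zero => simpa only [Safe] using h
  | succ j => rw [Safe] at h; exact h.1

lemma SafeK_thin {k0 j m : ℕ} {u : P.X m} (h : SafeK P k0 j u) : P.thin u := by
  cases j with
  | zero => simpa only [SafeK] using h
  | succ j => rw [SafeK] at h; exact h.1

lemma Safe_mono {j j' m : ℕ} {u : P.X m} (h : j' ≤ j) (hs : Safe P j u) : Safe P j' u := by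
  cases j' with
  | zero => rw [Safe]; exact Safe_thin hs
  | succ j'' =>
    cases j with
    | zero => omega
    | succ jj =>
      rw [Safe] at hs ⊢
      exact ⟨hs.1, fun a α h1 h2 h3 => hs.2 a α h1 (by omega) h3⟩

lemma SafeK_mono {k0 j j' m : ℕ} {u : P.X m} (h : j' ≤ j) (hs : SafeK P k0 j u) :
    SafeK P k0 j' u := by
  cases j' with
  | zero => rw [SafeK]; exact SafeK_thin hs
  | succ j'' =>
    cases j with
    | zero => omega
    | succ jj =>
      rw [SafeK] at hs ⊢
      exact ⟨hs.1, fun a α h1 h2 h3 h4 h5 => hs.2 a α h1 (by omega) h3 h4 h5⟩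

lemma Safe_toK (k0 : ℕ) : ∀ (j : ℕ) {m : ℕ} {u : P.X m}, Safe P j u → SafeK P k0 j u := by
  intro j
  induction j using Nat.strong_induction_on with
  | _ j ih =>
    intro m u hs
    cases j with
    | zero => rw [SafeK]; exact Safe_thin hs
    | succ jj =>
      rw [Safe] at hs
      rw [SafeK]
      exact ⟨hs.1, fun a α h1 h2 h3 _ _ => ih a (by omega) (hs.2 a α h1 h2 h3)⟩

lemma SafeK_of_Safe {k0 m : ℕ} {u : P.X m} (hs : Safe P k0 u) : SafeK P k0 (k0 + 1) u := by
  cases k0 with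
  | zero =>
    rw [SafeK]
    exact ⟨Safe_thin hs, fun a α h1 h2 h3 h4 h5 => by omega⟩
  | succ c =>
    rw [Safe] at hs
    rw [SafeK]
    exact ⟨hs.1, fun a α h1 h2 h3 h4 h5 => Safe_toK _ a (hs.2 a α h1 (by omega) h3)⟩

lemma SafeE (E : ∀ n : ℕ, Fin (n + 1) → P.X n → P.X (n + 1)) (hE : P.IsDegSys E) :
    ∀ (n : ℕ) (k : Fin (n + 1)) (w : P.X n), Safe P ((k : ℕ) + 1) (E n k w) := by
  intro n
  induction n with
  | zero =>
    intro k w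
    rw [Safe]
    refine ⟨hE.1 0 k w, ?_⟩
    intro a α h1 h2 h3
    have hk := k.isLt
    omega
  | succ n ih =>
    intro k w
    rw [Safe]
    refine ⟨hE.1 _ _ _, ?_⟩
    intro a α h1 h2 h3
    have hk := k.isLt
    rw [faceN_eq a (by omega) α _]
    rw [hE.2.2.1 n k ⟨a - 1, by omega⟩ α w (by simp; omega)]
    refine Safe_mono (by simp; omega) (ih ⟨(k : ℕ) - 1, by omega⟩ _)

lemma SafeG_low (E : ∀ n : ℕ, Fin (n + 1) → P.X n → P.X (n + 1))
    (G : ∀ n : ℕ, Fin (n + 1) → P.X (n + 1) → P.X (n + 1) → P.X (n + 2))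
    (hG : P.IsCompSys E G) :
    ∀ (n : ℕ) (k : Fin (n + 1)) (x y : P.X (n + 1)),
      P.face k true x = P.face k false y → Safe P ((k : ℕ) + 1) (G n k x y) := by
  intro n
  induction n with
  | zero =>
    intro k x y h
    rw [Safe]
    refine ⟨hG.1 0 k x y h, ?_⟩
    intro a α h1 h2 h3
    have hk := k.isLt
    omega
  | succ n ih =>
    intro k x y h
    rw [Safe]
    refine ⟨hG.1 _ _ _ _ h, ?_⟩
    intro a α h1 h2 h3
    have hk := k.isLt
    rw [faceN_eq a (by omega) α _]
    rw [hG.2.2.1 n k ⟨a - 1, by omega⟩ α x y h (by simp; omega)]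
    refine Safe_mono (by simp; omega) (ih ⟨(k : ℕ) - 1, by omega⟩ _ _ ?_)
    exact compat_low k x y h (a - 1) ((k : ℕ) - 1) (by omega) (by omega) α

lemma SafeKG (E : ∀ n : ℕ, Fin (n + 1) → P.X n → P.X (n + 1)) (hE : P.IsDegSys E)
    (G : ∀ n : ℕ, Fin (n + 1) → P.X (n + 1) → P.X (n + 1) → P.X (n + 2))
    (hG : P.IsCompSys E G) :
    ∀ (n : ℕ) (k : Fin (n + 1)) (x y : P.X (n + 1)),
      P.face k true x = P.face k false y →
      ∀ (j : ℕ), SafeK P ((k : ℕ) + 1) j (G n k x y) := by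
  intro n
  induction n using Nat.strong_induction_on with
  | _ n ih =>
    intro k x y h j
    cases j with
    | zero => rw [SafeK]; exact hG.1 n k x y h
    | succ j =>
      rw [SafeK]
      refine ⟨hG.1 n k x y h, ?_⟩
      intro a α h1 h2 h3 hne hne1
      have hk := k.isLt
      rw [faceN_eq a (by omega) α _]
      rcases lt_trichotomy a ((k : ℕ) + 1) with hlt | heq | hgt
      · -- a ≤ k : everything below `k` is fully safe
        have hs := SafeG_low E G hG n k x y h
        rw [Safe] at hs
        have hs2 := hs.2 a α h1 (by omega) (by omega)
        rw [faceN_eq a (by omega) α _] at hs2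
        exact Safe_toK _ a hs2
      · exact absurd heq hne
      · rcases Nat.lt_or_ge a ((k : ℕ) + 3) with h' | h'
        · -- a = k + 2 : the face is a degeneracy (sign must be `+`)
          have ha : a = (k : ℕ) + 2 := by omega
          subst ha
          cases α with
          | false => exact absurd ⟨rfl, rfl⟩ hne1
          | true =>
            rw [face_congr (i := (⟨(k : ℕ) + 2 - 1, by omega⟩ : Fin (n + 2)))
              (j := k.succ) (by simp) true _]
            rw [(hG.2.1 n k x y h).2.2]
            exact SafeK_of_Safe (SafeE E hE n k _)
        · -- a ≥ k + 3 : recurse into a smaller `G`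
          obtain ⟨n', rfl⟩ : ∃ n', n = n' + 1 := ⟨n - 1, by omega⟩
          rw [hG.2.2.2 n' k ⟨a - 1, by omega⟩ α x y h (by simp; omega)]
          exact ih n' (by omega) ⟨(k : ℕ), by omega⟩ _ _
            (compat_high k x y h (a - 2) (by omega) (by omega) α) a

lemma constSign_tail {a : ℕ × Bool} {M : List (ℕ × Bool)} (h : ConstSign (a :: M)) :
    ConstSign M := by
  obtain ⟨ε, hε⟩ := h
  refine ⟨-ε, fun t ht => ?_⟩
  have h2 := hε (t + 1) (by simpa using Nat.succ_lt_succ ht)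
  simp only [List.get_cons_succ] at h2
  have he : ((M.get ⟨t, ht⟩).1 + (t + 1) + 1) = ((M.get ⟨t, ht⟩).1 + t + 1) + 1 := by omega
  rw [he, pow_succ] at h2
  have := h2
  nlinarith [this]

lemma chain'_head_lt : ∀ (M : List (ℕ × Bool)) (a b : ℕ × Bool),
    (a :: M).Chain' (fun p q => p.1 < q.1) → b ∈ M → a.1 < b.1 := by
  intro M
  induction M with
  | nil => simp
  | cons c M ih =>
    intro a b hch hb
    have h1 : a.1 < c.1 := (List.isChain_cons_cons.mp hch).1
    rcases List.mem_cons.mp hb with rfl | hb'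
    · exact h1
    · exact lt_trans h1 (ih c b (List.isChain_cons_cons.mp hch).2 hb')

lemma chain_bound (N : ℕ) : ∀ (M : List (ℕ × Bool)) (p : ℕ × Bool),
    (p :: M).Chain' (fun p q => p.1 < q.1) → (∀ q ∈ p :: M, q.1 ≤ N) →
    p.1 + M.length ≤ N := by
  intro M
  induction M with
  | nil => intro p _ hb; simpa using hb p (by simp)
  | cons q M ih =>
    intro p hch hb
    have h2 := ih q (List.isChain_cons_cons.mp hch).2 (fun r hr => by
      apply hb; simp at hr ⊢; tauto)
    have hpq : p.1 < q.1 := (List.isChain_cons_cons.mp hch).1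
    simp only [List.length_cons]
    omega

lemma notMem_insert (k0 : ℕ) : ∀ (M : List (ℕ × Bool)),
    M.Chain' (fun p q => p.1 < q.1) → (∀ p ∈ M, p.1 ≠ k0) →
    ConstSign (insSorted (k0, true) M) → (k0 + 1, false) ∉ M := by
  intro M
  induction M with
  | nil => simp
  | cons a M ih =>
    intro hch hne hcs
    by_cases hle : k0 ≤ a.1
    · rw [insSorted, if_pos hle] at hcs
      have hak : k0 < a.1 := lt_of_le_of_ne hle (Ne.symm (hne a (by simp)))
      intro hmem
      rcases List.mem_cons.mp hmem with heq | hmem'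
      · subst heq
        obtain ⟨ε, hε⟩ := hcs
        have h0 := hε 0 (by simp)
        have h1 := hε 1 (by simp)
        simp [sgn] at h0 h1
        have hp : ((-1 : ℤ)) ^ (k0 + 1 + 1 + 1) = ((-1 : ℤ) ^ (k0 + 1)) := by
          have h3 : k0 + 1 + 1 + 1 = (k0 + 1) + 2 := by omega
          rw [h3, pow_add]
          norm_num
        rw [hp] at h1
        have hne0 : ((-1 : ℤ)) ^ (k0 + 1) ≠ 0 := pow_ne_zero _ (by norm_num)
        have : ((-1 : ℤ)) ^ (k0 + 1) = 0 := by linarith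
        exact hne0 this
      · have hlt := chain'_head_lt M a (k0 + 1, false) hch hmem'
        simp at hlt
        omega
    · rw [insSorted, if_neg hle] at hcs
      have hcs' := constSign_tail hcs
      have hnm := ih hch.tail (fun p hp => hne p (by simp [hp])) hcs'
      intro hmem
      rcases List.mem_cons.mp hmem with heq | hmem'
      · have := congrArg Prod.fst heq
        simp at this
        omega
      · exact hnm hmem'

lemma AdmG (hP : P.IsComplete) (E : ∀ n : ℕ, Fin (n + 1) → P.X n → P.X (n + 1))
    (hE : P.IsDegSys E)
    (G : ∀ n : ℕ, Fin (n + 1) → P.X (n + 1) → P.X (n + 1) → P.X (n + 2))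
    (hG : P.IsCompSys E G)
    (n : ℕ) (k : Fin (n + 1)) (x y : P.X (n + 1))
    (h : P.face k true x = P.face k false y) :
    P.AdmBox k.castSucc false (fun i α => P.face i α (G n k x y)) := by
  constructor
  · intro j i hle α β _ _
    exact P.face_rel j i hle α β (G n k x y)
  · intro p L hc
    obtain ⟨⟨hchain, hbnd⟩, hnk, hcs⟩ := hc
    have hkc : ((k.castSucc : ℕ)) = (k : ℕ) := rfl
    have hnotmem : ((k : ℕ) + 1 + 1, false) ∉ (p :: L) := by
      have := notMem_insert ((k : ℕ) + 1) (p :: L) hchain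
        (fun q hq => by have := hnk q hq; simpa using this) (by simpa using hcs)
      simpa using this
    have claim : ∀ (L' : List (ℕ × Bool)) (p' : ℕ × Bool),
        (p' :: L').Chain' (fun p q => p.1 < q.1) →
        (∀ q ∈ p' :: L', 1 ≤ q.1 ∧ q.1 ≤ n + 2) →
        (∀ q ∈ p' :: L', q.1 ≠ (k : ℕ) + 1) →
        (((k : ℕ) + 1 + 1, false) ∉ (p' :: L')) →
        SafeK P ((k : ℕ) + 1) p'.1
          (P.apBoxAux (fun i α => P.face i α (G n k x y)) p' L') := by
      intro L'
      induction L' with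
      | nil =>
        intro p' hch hb hk hnm
        have h5 := SafeKG E hE G hG n k x y h (p'.1 + 1)
        rw [SafeK] at h5
        exact h5.2 p'.1 p'.2 (hb p' (by simp)).1 (le_refl _) (hb p' (by simp)).2
          (hk p' (by simp)) (fun ⟨ha, hα⟩ => hnm (by
            simp only [List.mem_singleton]
            rw [← ha, ← hα]))
      | cons q L' ihL =>
        intro p' hch hb hk hnm
        have hq := ihL q (List.isChain_cons_cons.mp hch).2
          (fun r hr => hb r (by simp at hr ⊢; tauto))
          (fun r hr => hk r (by simp at hr ⊢; tauto))
          (fun hm => hnm (by simp at hm ⊢; tauto))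
        obtain ⟨c, hc⟩ : ∃ c, q.1 = c + 1 := ⟨q.1 - 1, by have := (hb q (by simp)).1; omega⟩
        rw [hc, SafeK] at hq
        have hbound : p'.1 + (q :: L').length ≤ n + 2 :=
          chain_bound (n + 2) (q :: L') p' hch (fun r hr => (hb r hr).2)
        simp only [List.length_cons] at hbound
        have hlt : p'.1 < q.1 := (List.isChain_cons_cons.mp hch).1
        exact hq.2 p'.1 p'.2 (hb p' (by simp)).1 (by omega) (by omega)
          (hk p' (by simp)) (fun ⟨ha, hα⟩ => hnm (by
            rw [← ha, ← hα]; simp))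
    exact SafeK_thin (claim L p hchain (fun q hq => hbnd q hq)
      (fun q hq => by have := hnk q hq; simpa using this) hnotmem)

lemma Gunique (hP : P.IsComplete) (E : ∀ n : ℕ, Fin (n + 1) → P.X n → P.X (n + 1))
    (hE : P.IsDegSys E)
    (G : ∀ n : ℕ, Fin (n + 1) → P.X (n + 1) → P.X (n + 1) → P.X (n + 2))
    (hG : P.IsCompSys E G)
    {n : ℕ} (k : Fin (n + 1)) (x y : P.X (n + 1))
    (h : P.face k true x = P.face k false y) (u : P.X (n + 2))
    (hu : P.thin u)
    (hf : ∀ (i : Fin (n + 2)) (α : Bool), ((i, α) : Fin (n + 2) × Bool) ≠ (k.castSucc, false) →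
      P.face i α u = P.face i α (G n k x y)) :
    u = G n k x y := by
  obtain ⟨v, _, huniq⟩ := hP.1 (n + 1) k.castSucc false _ (AdmG hP E hE G hG n k x y h)
  rw [huniq u ⟨hu, hf⟩, huniq (G n k x y) ⟨hG.1 n k x y h, fun i α _ => rfl⟩]

lemma cmp_thin (hP : P.IsComplete) (E : ∀ n : ℕ, Fin (n + 1) → P.X n → P.X (n + 1))
    (hE : P.IsDegSys E)
    (G : ∀ n : ℕ, Fin (n + 1) → P.X (n + 1) → P.X (n + 1) → P.X (n + 2))
    (hG : P.IsCompSys E G)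
    {n : ℕ} (k : Fin (n + 1)) (x y : P.X (n + 1))
    (h : P.face k true x = P.face k false y) (hx : P.thin x) (hy : P.thin y) :
    P.thin (P.cmp G k x y) := by
  apply hP.2.2 (n + 1) k.castSucc false (fun i α => P.face i α (G n k x y)) (G n k x y)
    (AdmG hP E hE G hG n k x y h) (hG.1 n k x y h) (fun i α _ => rfl)
  intro i α hne
  show P.thin (P.face i α (G n k x y))
  rcases Nat.lt_trichotomy (i : ℕ) (k : ℕ) with hlt | heq | hgt
  · obtain ⟨n', rfl⟩ : ∃ n', n = n' + 1 := ⟨n - 1, by have := k.isLt; omega⟩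
    rw [hG.2.2.1 n' k i α x y h hlt]
    exact hG.1 n' _ _ _ (compat_low k x y h (i : ℕ) ((k : ℕ) - 1) (by omega) (by omega) α)
  · cases α with
    | false =>
      exact absurd (by rw [show i = k.castSucc from Fin.ext (by simpa using heq)]) hne
    | true =>
      rw [face_congr (j := k.castSucc) (by simpa using heq) true, (hG.2.1 n k x y h).1]
      exact hy
  · rcases Nat.lt_or_ge (i : ℕ) ((k : ℕ) + 2) with h' | h'
    · have hik : (i : ℕ) = (k : ℕ) + 1 := by omega
      cases α with
      | false =>
        rw [face_congr (j := k.succ) (by simpa using hik) false, (hG.2.1 n k x y h).2.1]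
        exact hx
      | true =>
        rw [face_congr (j := k.succ) (by simpa using hik) true, (hG.2.1 n k x y h).2.2]
        exact hE.1 n k _
    · obtain ⟨n', rfl⟩ : ∃ n', n = n' + 1 := ⟨n - 1, by have := i.isLt; omega⟩
      rw [hG.2.2.2 n' k i α x y h (by omega)]
      exact hG.1 n' _ _ _ (compat_high k x y h ((i : ℕ) - 1) (by omega)
        (by have := i.isLt; omega) α)

lemma cmp_face_minus (E : ∀ n : ℕ, Fin (n + 1) → P.X n → P.X (n + 1))
    (G : ∀ n : ℕ, Fin (n + 1) → P.X (n + 1) → P.X (n + 1) → P.X (n + 2))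
    (hG : P.IsCompSys E G) {n : ℕ} (k : Fin (n + 1)) (x y : P.X (n + 1))
    (h : P.face k true x = P.face k false y) :
    P.face k false (P.cmp G k x y) = P.face k false x := by
  have hs := swap (P := P) (m := n) (k : ℕ) (k : ℕ) false false (G n k x y) le_rfl k.isLt
  show P.face ⟨(k : ℕ), k.isLt⟩ false
      (P.face ⟨(k : ℕ), by have := k.isLt; omega⟩ false (G n k x y)) = _
  rw [hs, face_congr (j := k.succ) (by simp) false, (hG.2.1 n k x y h).2.1]
  rfl

lemma cmp_face_plus (E : ∀ n : ℕ, Fin (n + 1) → P.X n → P.X (n + 1)) (hE : P.IsDegSys E)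
    (G : ∀ n : ℕ, Fin (n + 1) → P.X (n + 1) → P.X (n + 1) → P.X (n + 2))
    (hG : P.IsCompSys E G) {n : ℕ} (k : Fin (n + 1)) (x y : P.X (n + 1))
    (h : P.face k true x = P.face k false y) :
    P.face k true (P.cmp G k x y) = P.face k true y := by
  have hs := swap (P := P) (m := n) (k : ℕ) (k : ℕ) true false (G n k x y) le_rfl k.isLt
  show P.face ⟨(k : ℕ), k.isLt⟩ true
      (P.face ⟨(k : ℕ), by have := k.isLt; omega⟩ false (G n k x y)) = _
  rw [hs, face_congr (j := k.succ) (by simp) true, (hG.2.1 n k x y h).2.2]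
  show P.face ⟨(k : ℕ), k.isLt⟩ false (E n k (P.face k true y)) = _
  rw [show (⟨(k : ℕ), k.isLt⟩ : Fin (n + 1)) = k from Fin.ext rfl]
  exact hE.2.1 n k false _

lemma cmp_face_low (E : ∀ n : ℕ, Fin (n + 1) → P.X n → P.X (n + 1))
    (G : ∀ n : ℕ, Fin (n + 1) → P.X (n + 1) → P.X (n + 1) → P.X (n + 2))
    (hG : P.IsCompSys E G) {n : ℕ} (k : Fin (n + 2)) (x y : P.X (n + 2))
    (h : P.face k true x = P.face k false y) (i : ℕ) (hik : i < (k : ℕ)) (α : Bool) :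
    P.face ⟨i, by have := k.isLt; omega⟩ α (P.cmp G k x y) =
      P.cmp G (⟨(k : ℕ) - 1, by have := k.isLt; omega⟩ : Fin (n + 1))
        (P.face ⟨i, by have := k.isLt; omega⟩ α x)
        (P.face ⟨i, by have := k.isLt; omega⟩ α y) := by
  have hk := k.isLt
  obtain ⟨c, hc⟩ : ∃ c, (k : ℕ) = c + 1 := ⟨(k : ℕ) - 1, by omega⟩
  have hs := swap (P := P) (m := n + 1) i c false α (G (n + 1) k x y) (by omega) (by omega)
  show P.face ⟨i, by omega⟩ α (P.face k.castSucc false (G (n + 1) k x y)) = _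
  rw [face_congr (i := k.castSucc) (j := (⟨c + 1, by omega⟩ : Fin (n + 3)))
    (by simp [hc]) false (G (n + 1) k x y), ← hs]
  rw [hG.2.2.1 n k ⟨i, by omega⟩ α x y h (by simpa using hik)]
  exact face_congr (by simp [hc]) false _

lemma cmp_face_high (E : ∀ n : ℕ, Fin (n + 1) → P.X n → P.X (n + 1))
    (G : ∀ n : ℕ, Fin (n + 1) → P.X (n + 1) → P.X (n + 1) → P.X (n + 2))
    (hG : P.IsCompSys E G) {n : ℕ} (k : Fin (n + 2)) (x y : P.X (n + 2))
    (h : P.face k true x = P.face k false y) (i : ℕ) (hki : (k : ℕ) < i) (hi : i ≤ n + 1)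
    (α : Bool) :
    P.face ⟨i, by omega⟩ α (P.cmp G k x y) =
      P.cmp G (⟨(k : ℕ), by have := k.isLt; omega⟩ : Fin (n + 1))
        (P.face ⟨i, by omega⟩ α x) (P.face ⟨i, by omega⟩ α y) := by
  have hk := k.isLt
  have hs := swap (P := P) (m := n + 1) (k : ℕ) i α false (G (n + 1) k x y)
    (by omega) (by omega)
  show P.face ⟨i, by omega⟩ α (P.face ⟨(k : ℕ), by omega⟩ false (G (n + 1) k x y)) = _
  rw [hs]
  rw [hG.2.2.2 n k ⟨i + 1, by omega⟩ α x y h (by simp; omega)]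
  rfl

lemma eps_eps_mid (E : ∀ n : ℕ, Fin (n + 1) → P.X n → P.X (n + 1)) (hE : P.IsDegSys E)
    (G : ∀ n : ℕ, Fin (n + 1) → P.X (n + 1) → P.X (n + 1) → P.X (n + 2))
    (hG : P.IsCompSys E G) {n : ℕ} (k : Fin (n + 1)) (w : P.X n) (i : Fin (n + 2))
    (α : Bool) (hne : ((i, α) : Fin (n + 2) × Bool) ≠ (k.castSucc, false))
    (heqk : (i : ℕ) = (k : ℕ) ∨ (i : ℕ) = (k : ℕ) + 1) :
    P.face i α (E (n + 1) k.castSucc (E n k w)) = P.face i α (G n k (E n k w) (E n k w)) := by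
  have hcompat : P.face k true (E n k w) = P.face k false (E n k w) := by
    rw [hE.2.1 n k true w, hE.2.1 n k false w]
  rcases heqk with heq | heq
  · have hik : i = k.castSucc := Fin.ext (by simpa using heq)
    subst hik
    cases α with
    | false => exact absurd rfl hne
    | true =>
      rw [hE.2.1 (n + 1) k.castSucc true _, (hG.2.1 n k _ _ hcompat).1]
  · have hik : i = k.succ := Fin.ext (by simpa using heq)
    subst hik
    have hEi : P.face k.succ α (E (n + 1) k.castSucc (E n k w)) = E n k w := by
      rw [hE.2.2.2 n k.castSucc k.succ α (E n k w) (by simp)]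
      show E n ⟨(k : ℕ), k.isLt⟩ (P.face k α (E n k w)) = E n k w
      rw [hE.2.1 n k α w]
    rw [hEi]
    cases α with
    | false => rw [(hG.2.1 n k _ _ hcompat).2.1]
    | true => rw [(hG.2.1 n k _ _ hcompat).2.2, hE.2.1 n k true w]

lemma eps_eps (hP : P.IsComplete) (E : ∀ n : ℕ, Fin (n + 1) → P.X n → P.X (n + 1))
    (hE : P.IsDegSys E)
    (G : ∀ n : ℕ, Fin (n + 1) → P.X (n + 1) → P.X (n + 1) → P.X (n + 2))
    (hG : P.IsCompSys E G) :
    ∀ (n : ℕ) (k : Fin (n + 1)) (w : P.X n),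
      G n k (E n k w) (E n k w) = E (n + 1) k.castSucc (E n k w) := by
  intro n
  induction n with
  | zero =>
    intro k w
    have hcompat : P.face k true (E 0 k w) = P.face k false (E 0 k w) := by
      rw [hE.2.1 0 k true w, hE.2.1 0 k false w]
    refine (Gunique hP E hE G hG k _ _ hcompat _ (hE.1 1 k.castSucc _) ?_).symm
    intro i α hne
    have hk := k.isLt
    have hi := i.isLt
    rcases Nat.lt_trichotomy (i : ℕ) (k : ℕ) with hlt | heq | hgt
    · omega
    · exact eps_eps_mid E hE G hG k w i α hne (Or.inl heq)
    · exact eps_eps_mid E hE G hG k w i α hne (Or.inr (by omega))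
  | succ n ih =>
    intro k w
    have hcompat : P.face k true (E (n + 1) k w) = P.face k false (E (n + 1) k w) := by
      rw [hE.2.1 (n + 1) k true w, hE.2.1 (n + 1) k false w]
    refine (Gunique hP E hE G hG k _ _ hcompat _ (hE.1 (n + 2) k.castSucc _) ?_).symm
    intro i α hne
    have hk := k.isLt
    have hi := i.isLt
    rcases Nat.lt_trichotomy (i : ℕ) (k : ℕ) with hlt | heq | hgt
    · rw [hE.2.2.1 (n + 1) k.castSucc i α (E (n + 1) k w) (by simpa using hlt)]
      rw [hG.2.2.1 n k i α _ _ hcompat hlt]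
      rw [hE.2.2.1 n k ⟨(i : ℕ), by omega⟩ α w (by simpa using hlt)]
      rw [ih ⟨(k : ℕ) - 1, by omega⟩]
      rfl
    · exact eps_eps_mid E hE G hG k w i α hne (Or.inl heq)
    · rcases Nat.lt_or_ge (i : ℕ) ((k : ℕ) + 2) with h' | h'
      · exact eps_eps_mid E hE G hG k w i α hne (Or.inr (by omega))
      · rw [hE.2.2.2 (n + 1) k.castSucc i α (E (n + 1) k w) (by simp; omega)]
        rw [hG.2.2.2 n k i α _ _ hcompat (by omega)]
        rw [hE.2.2.2 n k ⟨(i : ℕ) - 1, by omega⟩ α w (by simp; omega)]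
        rw [ih ⟨(k : ℕ), by omega⟩]
        rfl

lemma key_mid (hP : P.IsComplete) (E : ∀ n : ℕ, Fin (n + 1) → P.X n → P.X (n + 1))
    (hE : P.IsDegSys E)
    (G : ∀ n : ℕ, Fin (n + 1) → P.X (n + 1) → P.X (n + 1) → P.X (n + 2))
    (hG : P.IsCompSys E G) {n : ℕ} (k : Fin (n + 1)) (x y z : P.X (n + 1))
    (h1 : P.face k true x = P.face k false y) (h2 : P.face k true y = P.face k false z)
    (i : Fin (n + 2)) (α : Bool)
    (hne : ((i, α) : Fin (n + 2) × Bool) ≠ (k.castSucc, false))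
    (heqk : (i : ℕ) = (k : ℕ) ∨ (i : ℕ) = (k : ℕ) + 1) :
    P.face i α (P.face (k.castSucc.castSucc) false
        (G (n + 1) k.castSucc (G n k x (P.cmp G k y z)) (G n k y z)))
      = P.face i α (G n k (P.cmp G k x y) z) := by
  have hk := k.isLt
  have hcyz : P.face k true x = P.face k false (P.cmp G k y z) := by
    rw [cmp_face_minus E G hG k y z h2]; exact h1
  have hQ : P.face k.castSucc true (G n k x (P.cmp G k y z))
      = P.face k.castSucc false (G n k y z) := by
    rw [(hG.2.1 n k x _ hcyz).1]; rfl
  have hxy : P.face k true (P.cmp G k x y) = P.face k false z := by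
    rw [cmp_face_plus E hE G hG k x y h1]; exact h2
  rcases heqk with heq | heq
  · have hik : i = k.castSucc := Fin.ext (by simpa using heq)
    subst hik
    cases α with
    | false => exact absurd rfl hne
    | true =>
      have hs := swap (P := P) (m := n + 1) (k : ℕ) (k : ℕ) true false
        (G (n + 1) k.castSucc (G n k x (P.cmp G k y z)) (G n k y z)) le_rfl (by omega)
      have e1 : P.face (⟨(k : ℕ) + 1, by omega⟩ : Fin (n + 3)) true
          (G (n + 1) k.castSucc (G n k x (P.cmp G k y z)) (G n k y z))
            = E (n + 1) k.castSucc z :=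
        ((hG.2.1 (n + 1) k.castSucc _ _ hQ).2.2).trans
          (congrArg (E (n + 1) k.castSucc) ((hG.2.1 n k y z h2).1))
      calc P.face k.castSucc true (P.face (k.castSucc.castSucc) false
              (G (n + 1) k.castSucc (G n k x (P.cmp G k y z)) (G n k y z)))
          = P.face ⟨(k : ℕ), by omega⟩ false (P.face ⟨(k : ℕ) + 1, by omega⟩ true
              (G (n + 1) k.castSucc (G n k x (P.cmp G k y z)) (G n k y z))) := hs
        _ = P.face ⟨(k : ℕ), by omega⟩ false (E (n + 1) k.castSucc z) := by rw [e1]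
        _ = z := hE.2.1 (n + 1) k.castSucc false z
        _ = P.face k.castSucc true (G n k (P.cmp G k x y) z) :=
            ((hG.2.1 n k _ z hxy).1).symm
  · have hik : i = k.succ := Fin.ext (by simpa using heq)
    subst hik
    have hs := swap (P := P) (m := n + 1) (k : ℕ) ((k : ℕ) + 1) α false
      (G (n + 1) k.castSucc (G n k x (P.cmp G k y z)) (G n k y z)) (by omega) (by omega)
    cases α with
    | false =>
      have eQ : P.face (⟨(k : ℕ) + 1 + 1, by omega⟩ : Fin (n + 3)) false
          (G (n + 1) k.castSucc (G n k x (P.cmp G k y z)) (G n k y z)) = G n k x y :=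
        (hG.2.2.2 n k.castSucc ⟨(k : ℕ) + 1 + 1, by omega⟩ false _ _ hQ
            (by simp)).trans
          (congrArg₂ (G n k) ((hG.2.1 n k x _ hcyz).2.1) ((hG.2.1 n k y z h2).2.1))
      calc P.face k.succ false (P.face (k.castSucc.castSucc) false
              (G (n + 1) k.castSucc (G n k x (P.cmp G k y z)) (G n k y z)))
          = P.face ⟨(k : ℕ), by omega⟩ false (P.face ⟨(k : ℕ) + 1 + 1, by omega⟩ false
              (G (n + 1) k.castSucc (G n k x (P.cmp G k y z)) (G n k y z))) := hs
        _ = P.face ⟨(k : ℕ), by omega⟩ false (G n k x y) := by rw [eQ]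
        _ = P.cmp G k x y := rfl
        _ = P.face k.succ false (G n k (P.cmp G k x y) z) :=
            ((hG.2.1 n k _ z hxy).2.1).symm
    | true =>
      have hw : P.face k true (P.cmp G k y z) = P.face k true z :=
        cmp_face_plus E hE G hG k y z h2
      have eQ : P.face (⟨(k : ℕ) + 1 + 1, by omega⟩ : Fin (n + 3)) true
          (G (n + 1) k.castSucc (G n k x (P.cmp G k y z)) (G n k y z))
            = G n k (E n k (P.face k true z)) (E n k (P.face k true z)) :=
        (hG.2.2.2 n k.castSucc ⟨(k : ℕ) + 1 + 1, by omega⟩ true _ _ hQ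
            (by simp)).trans
          (congrArg₂ (G n k)
            (((hG.2.1 n k x _ hcyz).2.2).trans (congrArg (E n k) hw))
            ((hG.2.1 n k y z h2).2.2))
      calc P.face k.succ true (P.face (k.castSucc.castSucc) false
              (G (n + 1) k.castSucc (G n k x (P.cmp G k y z)) (G n k y z)))
          = P.face ⟨(k : ℕ), by omega⟩ false (P.face ⟨(k : ℕ) + 1 + 1, by omega⟩ true
              (G (n + 1) k.castSucc (G n k x (P.cmp G k y z)) (G n k y z))) := hs
        _ = P.face ⟨(k : ℕ), by omega⟩ false
              (G n k (E n k (P.face k true z)) (E n k (P.face k true z))) := by rw [eQ]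
        _ = P.face ⟨(k : ℕ), by omega⟩ false
              (E (n + 1) k.castSucc (E n k (P.face k true z))) := by
            rw [eps_eps hP E hE G hG n k (P.face k true z)]
        _ = E n k (P.face k true z) := hE.2.1 (n + 1) k.castSucc false _
        _ = P.face k.succ true (G n k (P.cmp G k x y) z) :=
            ((hG.2.1 n k _ z hxy).2.2).symm

set_option maxHeartbeats 2000000 in
lemma key (hP : P.IsComplete) (E : ∀ n : ℕ, Fin (n + 1) → P.X n → P.X (n + 1))
    (hE : P.IsDegSys E)
    (G : ∀ n : ℕ, Fin (n + 1) → P.X (n + 1) → P.X (n + 1) → P.X (n + 2)) 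
    (hG : P.IsCompSys E G) :
    ∀ (n : ℕ) (k : Fin (n + 1)) (x y z : P.X (n + 1))
      (h1 : P.face k true x = P.face k false y)
      (h2 : P.face k true y = P.face k false z),
      P.face (k.castSucc.castSucc) false
          (G (n + 1) k.castSucc (G n k x (P.cmp G k y z)) (G n k y z))
        = G n k (P.cmp G k x y) z := by
  intro n
  induction n with
  | zero =>
    intro k x y z h1 h2
    have hcyz : P.face k true x = P.face k false (P.cmp G k y z) := by
      rw [cmp_face_minus E G hG k y z h2]; exact h1
    have hQ : P.face k.castSucc true (G 0 k x (P.cmp G k y z))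
        = P.face k.castSucc false (G 0 k y z) := by
      rw [(hG.2.1 0 k x _ hcyz).1]; rfl
    have hxy : P.face k true (P.cmp G k x y) = P.face k false z := by
      rw [cmp_face_plus E hE G hG k x y h1]; exact h2
    refine Gunique hP E hE G hG k (P.cmp G k x y) z hxy _
      (cmp_thin hP E hE G hG k.castSucc _ _ hQ (hG.1 0 k x _ hcyz) (hG.1 0 k y z h2)) ?_
    intro i α hne
    have hk := k.isLt
    have hi := i.isLt
    rcases Nat.lt_trichotomy (i : ℕ) (k : ℕ) with hlt | heq | hgt
    · omega
    · exact key_mid hP E hE G hG k x y z h1 h2 i α hne (Or.inl heq)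
    · exact key_mid hP E hE G hG k x y z h1 h2 i α hne (Or.inr (by omega))
  | succ n ih =>
    intro k x y z h1 h2
    have hcyz : P.face k true x = P.face k false (P.cmp G k y z) := by
      rw [cmp_face_minus E G hG k y z h2]; exact h1
    have hQ : P.face k.castSucc true (G (n + 1) k x (P.cmp G k y z))
        = P.face k.castSucc false (G (n + 1) k y z) := by
      rw [(hG.2.1 (n + 1) k x _ hcyz).1]; rfl
    have hxy : P.face k true (P.cmp G k x y) = P.face k false z := by
      rw [cmp_face_plus E hE G hG k x y h1]; exact h2
    refine Gunique hP E hE G hG k (P.cmp G k x y) z hxy _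
      (cmp_thin hP E hE G hG k.castSucc _ _ hQ (hG.1 (n + 1) k x _ hcyz)
        (hG.1 (n + 1) k y z h2)) ?_
    intro i α hne
    have hk := k.isLt
    have hi := i.isLt
    rcases Nat.lt_trichotomy (i : ℕ) (k : ℕ) with hlt | heq | hgt
    · -- i < k
      have hKK : (k.castSucc.castSucc : Fin (n + 4))
          = (⟨((k : ℕ) - 1) + 1, by omega⟩ : Fin (n + 4)) := Fin.ext (by simp; omega)
      rw [hKK]
      have hs := swap (P := P) (m := n + 2) (i : ℕ) ((k : ℕ) - 1) false α
        (G (n + 2) k.castSucc (G (n + 1) k x (P.cmp G k y z)) (G (n + 1) k y z))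
        (by omega) (by omega)
      have eA : P.face (⟨(i : ℕ), by omega⟩ : Fin (n + 3)) α
          (G (n + 1) k x (P.cmp G k y z))
            = G n (⟨(k : ℕ) - 1, by omega⟩ : Fin (n + 1))
              (P.face (⟨(i : ℕ), by omega⟩ : Fin (n + 2)) α x)
              (P.cmp G (⟨(k : ℕ) - 1, by omega⟩ : Fin (n + 1))
                (P.face (⟨(i : ℕ), by omega⟩ : Fin (n + 2)) α y)
                (P.face (⟨(i : ℕ), by omega⟩ : Fin (n + 2)) α z)) :=
        (hG.2.2.1 n k ⟨(i : ℕ), by omega⟩ α x (P.cmp G k y z) hcyz (by simpa using hlt)).trans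
          (congrArg (G n (⟨(k : ℕ) - 1, by omega⟩ : Fin (n + 1))
              (P.face (⟨(i : ℕ), by omega⟩ : Fin (n + 2)) α x))
            (cmp_face_low E G hG k y z h2 (i : ℕ) hlt α))
      have eB : P.face (⟨(i : ℕ), by omega⟩ : Fin (n + 3)) α (G (n + 1) k y z)
            = G n (⟨(k : ℕ) - 1, by omega⟩ : Fin (n + 1))
              (P.face (⟨(i : ℕ), by omega⟩ : Fin (n + 2)) α y)
              (P.face (⟨(i : ℕ), by omega⟩ : Fin (n + 2)) α z) :=
        hG.2.2.1 n k ⟨(i : ℕ), by omega⟩ α y z h2 (by simpa using hlt)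
      have eBig : P.face (⟨(i : ℕ), by omega⟩ : Fin (n + 4)) α
          (G (n + 2) k.castSucc (G (n + 1) k x (P.cmp G k y z)) (G (n + 1) k y z))
            = G (n + 1) (⟨(k : ℕ) - 1, by omega⟩ : Fin (n + 2))
              (G n (⟨(k : ℕ) - 1, by omega⟩ : Fin (n + 1))
                (P.face (⟨(i : ℕ), by omega⟩ : Fin (n + 2)) α x)
                (P.cmp G (⟨(k : ℕ) - 1, by omega⟩ : Fin (n + 1))
                  (P.face (⟨(i : ℕ), by omega⟩ : Fin (n + 2)) α y)
                  (P.face (⟨(i : ℕ), by omega⟩ : Fin (n + 2)) α z)))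
              (G n (⟨(k : ℕ) - 1, by omega⟩ : Fin (n + 1))
                (P.face (⟨(i : ℕ), by omega⟩ : Fin (n + 2)) α y)
                (P.face (⟨(i : ℕ), by omega⟩ : Fin (n + 2)) α z)) :=
        (hG.2.2.1 (n + 1) k.castSucc ⟨(i : ℕ), by omega⟩ α _ _ hQ (by simpa using hlt)).trans
          (congrArg₂ (G (n + 1) (⟨(k : ℕ) - 1, by omega⟩ : Fin (n + 2))) eA eB)
      have h1' := compat_low k x y h1 (i : ℕ) ((k : ℕ) - 1) (by omega) (by omega) α
      have h2' := compat_low k y z h2 (i : ℕ) ((k : ℕ) - 1) (by omega) (by omega) α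
      have eT : P.face i α (G (n + 1) k (P.cmp G k x y) z)
            = G n (⟨(k : ℕ) - 1, by omega⟩ : Fin (n + 1))
              (P.cmp G (⟨(k : ℕ) - 1, by omega⟩ : Fin (n + 1))
                (P.face (⟨(i : ℕ), by omega⟩ : Fin (n + 2)) α x)
                (P.face (⟨(i : ℕ), by omega⟩ : Fin (n + 2)) α y))
              (P.face (⟨(i : ℕ), by omega⟩ : Fin (n + 2)) α z) :=
        (hG.2.2.1 n k i α (P.cmp G k x y) z hxy hlt).trans
          (congrArg₂ (G n (⟨(k : ℕ) - 1, by omega⟩ : Fin (n + 1)))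
            (cmp_face_low E G hG k x y h1 (i : ℕ) hlt α) rfl)
      calc P.face i α (P.face (⟨((k : ℕ) - 1) + 1, by omega⟩ : Fin (n + 4)) false
              (G (n + 2) k.castSucc (G (n + 1) k x (P.cmp G k y z)) (G (n + 1) k y z)))
          = P.face ⟨(k : ℕ) - 1, by omega⟩ false
              (P.face (⟨(i : ℕ), by omega⟩ : Fin (n + 4)) α
                (G (n + 2) k.castSucc (G (n + 1) k x (P.cmp G k y z))
                  (G (n + 1) k y z))) := hs.symm
        _ = P.face ⟨(k : ℕ) - 1, by omega⟩ false
              (G (n + 1) (⟨(k : ℕ) - 1, by omega⟩ : Fin (n + 2))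
                (G n (⟨(k : ℕ) - 1, by omega⟩ : Fin (n + 1))
                  (P.face (⟨(i : ℕ), by omega⟩ : Fin (n + 2)) α x)
                  (P.cmp G (⟨(k : ℕ) - 1, by omega⟩ : Fin (n + 1))
                    (P.face (⟨(i : ℕ), by omega⟩ : Fin (n + 2)) α y)
                    (P.face (⟨(i : ℕ), by omega⟩ : Fin (n + 2)) α z)))
                (G n (⟨(k : ℕ) - 1, by omega⟩ : Fin (n + 1))
                  (P.face (⟨(i : ℕ), by omega⟩ : Fin (n + 2)) α y)
                  (P.face (⟨(i : ℕ), by omega⟩ : Fin (n + 2)) α z))) := by rw [eBig]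
        _ = G n (⟨(k : ℕ) - 1, by omega⟩ : Fin (n + 1))
              (P.cmp G (⟨(k : ℕ) - 1, by omega⟩ : Fin (n + 1))
                (P.face (⟨(i : ℕ), by omega⟩ : Fin (n + 2)) α x)
                (P.face (⟨(i : ℕ), by omega⟩ : Fin (n + 2)) α y))
              (P.face (⟨(i : ℕ), by omega⟩ : Fin (n + 2)) α z) :=
            ih ⟨(k : ℕ) - 1, by omega⟩ _ _ _ h1' h2'
        _ = P.face i α (G (n + 1) k (P.cmp G k x y) z) := eT.symm
    · exact key_mid hP E hE G hG k x y z h1 h2 i α hne (Or.inl heq)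
    · rcases Nat.lt_or_ge (i : ℕ) ((k : ℕ) + 2) with h' | h'
      · exact key_mid hP E hE G hG k x y z h1 h2 i α hne (Or.inr (by omega))
      · -- i ≥ k + 2
        have hs := swap (P := P) (m := n + 2) (k : ℕ) (i : ℕ) α false
          (G (n + 2) k.castSucc (G (n + 1) k x (P.cmp G k y z)) (G (n + 1) k y z))
          (by omega) (by omega)
        have eA : P.face (⟨(i : ℕ), by omega⟩ : Fin (n + 3)) α
            (G (n + 1) k x (P.cmp G k y z))
              = G n (⟨(k : ℕ), by omega⟩ : Fin (n + 1))
                (P.face (⟨(i : ℕ) - 1, by omega⟩ : Fin (n + 2)) α x)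
                (P.cmp G (⟨(k : ℕ), by omega⟩ : Fin (n + 1))
                  (P.face (⟨(i : ℕ) - 1, by omega⟩ : Fin (n + 2)) α y)
                  (P.face (⟨(i : ℕ) - 1, by omega⟩ : Fin (n + 2)) α z)) :=
          (hG.2.2.2 n k ⟨(i : ℕ), by omega⟩ α x (P.cmp G k y z) hcyz (by simp; omega)).trans
            (congrArg (G n (⟨(k : ℕ), by omega⟩ : Fin (n + 1))
                (P.face (⟨(i : ℕ) - 1, by omega⟩ : Fin (n + 2)) α x))
              (cmp_face_high E G hG k y z h2 ((i : ℕ) - 1) (by omega) (by omega) α))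
        have eB : P.face (⟨(i : ℕ), by omega⟩ : Fin (n + 3)) α (G (n + 1) k y z)
              = G n (⟨(k : ℕ), by omega⟩ : Fin (n + 1))
                (P.face (⟨(i : ℕ) - 1, by omega⟩ : Fin (n + 2)) α y)
                (P.face (⟨(i : ℕ) - 1, by omega⟩ : Fin (n + 2)) α z) :=
          hG.2.2.2 n k ⟨(i : ℕ), by omega⟩ α y z h2 (by simp; omega)
        have eBig : P.face (⟨(i : ℕ) + 1, by omega⟩ : Fin (n + 4)) α
            (G (n + 2) k.castSucc (G (n + 1) k x (P.cmp G k y z)) (G (n + 1) k y z))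
              = G (n + 1) (⟨(k : ℕ), by omega⟩ : Fin (n + 2))
                (G n (⟨(k : ℕ), by omega⟩ : Fin (n + 1))
                  (P.face (⟨(i : ℕ) - 1, by omega⟩ : Fin (n + 2)) α x)
                  (P.cmp G (⟨(k : ℕ), by omega⟩ : Fin (n + 1))
                    (P.face (⟨(i : ℕ) - 1, by omega⟩ : Fin (n + 2)) α y)
                    (P.face (⟨(i : ℕ) - 1, by omega⟩ : Fin (n + 2)) α z)))
                (G n (⟨(k : ℕ), by omega⟩ : Fin (n + 1))
                  (P.face (⟨(i : ℕ) - 1, by omega⟩ : Fin (n + 2)) α y)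
                  (P.face (⟨(i : ℕ) - 1, by omega⟩ : Fin (n + 2)) α z)) :=
          (hG.2.2.2 (n + 1) k.castSucc ⟨(i : ℕ) + 1, by omega⟩ α _ _ hQ (by simp; omega)).trans
            (congrArg₂ (G (n + 1) (⟨(k : ℕ), by omega⟩ : Fin (n + 2))) eA eB)
        have h1' := compat_high k x y h1 ((i : ℕ) - 1) (by omega) (by omega) α
        have h2' := compat_high k y z h2 ((i : ℕ) - 1) (by omega) (by omega) α
        have eT : P.face i α (G (n + 1) k (P.cmp G k x y) z)
              = G n (⟨(k : ℕ), by omega⟩ : Fin (n + 1))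
                (P.cmp G (⟨(k : ℕ), by omega⟩ : Fin (n + 1))
                  (P.face (⟨(i : ℕ) - 1, by omega⟩ : Fin (n + 2)) α x)
                  (P.face (⟨(i : ℕ) - 1, by omega⟩ : Fin (n + 2)) α y))
                (P.face (⟨(i : ℕ) - 1, by omega⟩ : Fin (n + 2)) α z) :=
          (hG.2.2.2 n k i α (P.cmp G k x y) z hxy (by omega)).trans
            (congrArg₂ (G n (⟨(k : ℕ), by omega⟩ : Fin (n + 1)))
              (cmp_face_high E G hG k x y h1 ((i : ℕ) - 1) (by omega) (by omega) α) rfl)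
        calc P.face i α (P.face (k.castSucc.castSucc) false
                (G (n + 2) k.castSucc (G (n + 1) k x (P.cmp G k y z)) (G (n + 1) k y z)))
            = P.face ⟨(k : ℕ), by omega⟩ false
                (P.face (⟨(i : ℕ) + 1, by omega⟩ : Fin (n + 4)) α
                  (G (n + 2) k.castSucc (G (n + 1) k x (P.cmp G k y z))
                    (G (n + 1) k y z))) := hs
          _ = P.face ⟨(k : ℕ), by omega⟩ false
                (G (n + 1) (⟨(k : ℕ), by omega⟩ : Fin (n + 2))
                  (G n (⟨(k : ℕ), by omega⟩ : Fin (n + 1))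
                    (P.face (⟨(i : ℕ) - 1, by omega⟩ : Fin (n + 2)) α x)
                    (P.cmp G (⟨(k : ℕ), by omega⟩ : Fin (n + 1))
                      (P.face (⟨(i : ℕ) - 1, by omega⟩ : Fin (n + 2)) α y)
                      (P.face (⟨(i : ℕ) - 1, by omega⟩ : Fin (n + 2)) α z)))
                  (G n (⟨(k : ℕ), by omega⟩ : Fin (n + 1))
                    (P.face (⟨(i : ℕ) - 1, by omega⟩ : Fin (n + 2)) α y)
                    (P.face (⟨(i : ℕ) - 1, by omega⟩ : Fin (n + 2)) α z))) := by rw [eBig]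
          _ = G n (⟨(k : ℕ), by omega⟩ : Fin (n + 1))
                (P.cmp G (⟨(k : ℕ), by omega⟩ : Fin (n + 1))
                  (P.face (⟨(i : ℕ) - 1, by omega⟩ : Fin (n + 2)) α x)
                  (P.face (⟨(i : ℕ) - 1, by omega⟩ : Fin (n + 2)) α y))
                (P.face (⟨(i : ℕ) - 1, by omega⟩ : Fin (n + 2)) α z) :=
              ih ⟨(k : ℕ), by omega⟩ _ _ _ h1' h2'
          _ = P.face i α (G (n + 1) k (P.cmp G k x y) z) := eT.symm

end AssocAux

/-- in a complete stratified precubical set, if `x`, `y`, `z` are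
`n`-cubes with `∂_k^+ x = ∂_k^− y` and `∂_k^+ y = ∂_k^− z`, then
`(x ∘_k y) ∘_k z = x ∘_k (y ∘_k z)`. -/
theorem composite_assoc (P : SPS) (hP : P.IsComplete)
    (E : ∀ n : ℕ, Fin (n + 1) → P.X n → P.X (n + 1)) (hE : P.IsDegSys E)
    (G : ∀ n : ℕ, Fin (n + 1) → P.X (n + 1) → P.X (n + 1) → P.X (n + 2))
    (hG : P.IsCompSys E G)
    (n : ℕ) (k : Fin (n + 1)) (x y z : P.X (n + 1))
    (h1 : P.face k true x = P.face k false y)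
    (h2 : P.face k true y = P.face k false z) :
    P.cmp G k (P.cmp G k x y) z = P.cmp G k x (P.cmp G k y z) := by
  have hk := k.isLt
  have hcyz : P.face k true x = P.face k false (P.cmp G k y z) := by
    rw [cmp_face_minus E G hG k y z h2]; exact h1
  have hQ : P.face k.castSucc true (G n k x (P.cmp G k y z))
      = P.face k.castSucc false (G n k y z) := by
    rw [(hG.2.1 n k x _ hcyz).1]; rfl
  have hkey := key hP E hE G hG n k x y z h1 h2
  have e1 : P.face (⟨(k : ℕ) + 1, by omega⟩ : Fin (n + 3)) false
      (G (n + 1) k.castSucc (G n k x (P.cmp G k y z)) (G n k y z))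
        = G n k x (P.cmp G k y z) :=
    (hG.2.1 (n + 1) k.castSucc _ _ hQ).2.1
  calc P.cmp G k (P.cmp G k x y) z
      = P.face k.castSucc false (G n k (P.cmp G k x y) z) := rfl
    _ = P.face k.castSucc false (P.face (k.castSucc.castSucc) false
          (G (n + 1) k.castSucc (G n k x (P.cmp G k y z)) (G n k y z))) := by rw [hkey]
    _ = P.face ⟨(k : ℕ), by omega⟩ false (P.face ⟨(k : ℕ) + 1, by omega⟩ false
          (G (n + 1) k.castSucc (G n k x (P.cmp G k y z)) (G n k y z))) :=
        swap (P := P) (m := n + 1) (k : ℕ) (k : ℕ) false false _ le_rfl (by omega)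
    _ = P.face ⟨(k : ℕ), by omega⟩ false (G n k x (P.cmp G k y z)) := by rw [e1]
    _ = P.cmp G k x (P.cmp G k y z) := rfl

end CubicalNerve
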